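/- arXiv:1609.04005 — 2 statements merged into one kernel-verified Lean document; each statement's English description precedes it below -/
import Mathlib

section
/- Let P ⊆ 2^ω be a perfect set and let Q_n ⊆ P (n ∈ ℕ) be perfect sets such that μ_P(⋃_{n∈ℕ} Q_n) = 1. If A ⊆ P is such that A ∩ Q_n is Q_n-measurable for every n ∈ ℕ, then A is P-measurable and μ_P(A) ≤ Σ_{n∈ℕ} μ_{Q_n}(A ∩ Q_n). In particular, if A ∩ Q_n is Q_n-null for all n ∈ ℕ, then A is P-null. -/
open MeasureTheory Set Pointwise

/-- The Cantor space `2^ω`, a compact topological group under coordinatewise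
addition mod 2. -/
abbrev CS := ℕ → ZMod 2

/-- The basic clopen set `[w]` determined by a finite binary sequence `w`:
all `x ∈ 2^ω` extending `w`. -/
def cyl (w : List (ZMod 2)) : Set CS := {x | ∀ i, i < w.length → x i = w.getD i 0}

/-- `w` is a branching node of `P`: both `[w⌢0] ∩ P` and `[w⌢1] ∩ P` are nonempty. -/
def Branch (P : Set CS) (w : List (ZMod 2)) : Prop :=
  (cyl (w ++ [0]) ∩ P).Nonempty ∧ (cyl (w ++ [1]) ∩ P).Nonempty

/-- A perfect subset of Cantor space: nonempty, closed, with no isolated points. -/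
def PerfSet (P : Set CS) : Prop := Perfect P ∧ P.Nonempty

/-- `ν` is a canonical measure of the perfect set `P`: a Borel probability measure with
`ν P = 1` and `ν [w⌢0] = ν [w⌢1]` for every branching node `w` of `P`. -/
def IsCanonical (P : Set CS) (ν : Measure CS) : Prop :=
  IsProbabilityMeasure ν ∧ ν P = 1 ∧
    ∀ w : List (ZMod 2), Branch P w → ν (cyl (w ++ [0])) = ν (cyl (w ++ [1]))

/-- `A` is `P`-null: the `μ_P`-outer measure of `A ∩ P` is `0`
(quantified over all canonical measures of `P`). -/
def PNull (P A : Set CS) : Prop := ∀ ν : Measure CS, IsCanonical P ν → ν (A ∩ P) = 0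

/-- `A` is `P`-measurable: `A ∩ P` differs from a Borel set by a `P`-null set,
i.e. it is null-measurable with respect to the canonical measure of `P`. -/
def PMeasurable (P A : Set CS) : Prop :=
  ∀ ν : Measure CS, IsCanonical P ν → NullMeasurableSet (A ∩ P) ν

/-- `X` is perfectly null: `P`-null for every perfect set `P`. -/
def PerfectlyNull (X : Set CS) : Prop := ∀ P, PerfSet P → PNull P X

/-- `μ` is the fair-coin (Lebesgue product) measure on `2^ω`:
a Borel probability measure with `μ [w] = 2^{-|w|}` for every finite binary sequence. -/
def IsFairCoin (μ : Measure CS) : Prop :=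
  IsProbabilityMeasure μ ∧ ∀ w : List (ZMod 2), μ (cyl w) = (2 : ENNReal)⁻¹ ^ w.length

/-- The number of branching nodes of `P` that are proper initial segments of `v`. -/
noncomputable def brCount (P : Set CS) (v : List (ZMod 2)) : ℕ :=
  Set.ncard {u : List (ZMod 2) | u <+: v ∧ u ≠ v ∧ Branch P u}

/-- A balanced perfect set: branching nodes of strictly smaller level
are strictly shorter. -/
def BalancedPerf (P : Set CS) : Prop :=
  PerfSet P ∧ ∀ v w : List (ZMod 2), Branch P v → Branch P w →
    brCount P v < brCount P w → v.length < w.length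

/-- A uniformly perfect set: on each length, either all nodes meeting `P` branch,
or none does. -/
def UniformlyPerf (P : Set CS) : Prop :=
  PerfSet P ∧ ∀ n : ℕ,
    (∀ w : List (ZMod 2), w.length = n → (cyl w ∩ P).Nonempty → Branch P w) ∨
    (∀ w : List (ZMod 2), w.length = n → ¬ Branch P w)

/-- A Silver perfect set: determined by a partial function `ℕ ⇀ 2`
whose domain has infinite complement. -/
def SilverPerf (P : Set CS) : Prop :=
  ∃ f : ℕ → Option (ZMod 2), {n | f n = none}.Infinite ∧
    P = {x | ∀ n b, f n = some b → x n = b}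

/-- A Marczewski null (`s₀`) set. -/
def S0Set (X : Set CS) : Prop :=
  ∀ P, PerfSet P → ∃ Q, PerfSet Q ∧ Q ⊆ P ∧ Q ∩ X = ∅

/-- `S` is a Sierpiński set with respect to the measure `μ`: uncountable, with
countable intersection with every `μ`-null set. -/
def Sierpinski (μ : Measure CS) (S : Set CS) : Prop :=
  ¬ S.Countable ∧ ∀ N : Set CS, μ N = 0 → (S ∩ N).Countable

/-- The interleaving homeomorphism `h : 2^ω × 2^ω → 2^ω`,
`h(x,y) = ⟨x 0, y 0, x 1, y 1, …⟩`. -/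
def interleave (p : CS × CS) : CS := fun n => if n % 2 = 0 then p.1 (n / 2) else p.2 (n / 2)

/-- `X` is universally null: outer measure zero with respect to every finite diffused
Borel measure on `2^ω`. -/
def UniversallyNull (X : Set CS) : Prop :=
  ∀ μ : Measure CS, IsFiniteMeasure μ → (∀ x : CS, μ {x} = 0) → μ X = 0

/-- `X` is strongly null: for every sequence of positive `ε n` there are sets `A n` of
diameter `< ε n` (with respect to the standard metric `d(x,y) = 2^{-min{n : x n ≠ y n}}`,
expressed combinatorially) covering `X`. -/
def StronglyNull (X : Set CS) : Prop :=
  ∀ ε : ℕ → ℝ, (∀ n, 0 < ε n) → ∃ A : ℕ → Set CS,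
    (∀ n, ∃ N : ℕ, (2 : ℝ)⁻¹ ^ N < ε n ∧ ∀ x ∈ A n, ∀ y ∈ A n, ∀ i < N, x i = y i) ∧
    X ⊆ ⋃ n, A n

/-- `X` is perfectly null in the transitive sense: for every perfect `P` there is a
`G_δ` set `G ⊇ X` with `(G + t) ∩ P` being `P`-null for every `t`. -/
def PNPrime (X : Set CS) : Prop :=
  ∀ P, PerfSet P → ∃ G : Set CS, IsGδ G ∧ X ⊆ G ∧
    ∀ t : CS, PNull P ((fun g => g + t) '' G)

/-!
For closed `Q ⊆ P` with canonical measures `νQ` and `νP`, we have `νP ≤ νQ` on subsets of `Q`.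
Along a branch of the tree of `Q`, `νQ` is halved exactly at the branching nodes of `Q`, which
are branching nodes of `P` as well and so halve `νP`; hence the inequality holds on cylinders
meeting `Q`, and it passes to open sets (disjoint unions of cylinders) and then to all sets by
outer regularity. Since the `Q n` cover `P` up to a `νP`-null set, this gives both the bound
`νP A ≤ ∑' n, νQ n (A ∩ Q n)` and the measurability of `A`. The hypotheses on `A ∩ Q n` speak
about all canonical measures of `Q n`, so we also need one to exist: push a Haar measure on
`2^ω` forward along the map that reads a digit at each branching node.
-/

open Filter Topology

def word (x : CS) (n : ℕ) : List (ZMod 2) := List.ofFn fun i : Fin n => x i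

@[simp] lemma length_word (x : CS) (n : ℕ) : (word x n).length = n := by simp [word]

lemma word_succ (x : CS) (n : ℕ) : word x (n + 1) = word x n ++ [x n] := by
  rw [word, word, List.ofFn_succ_last]
  rfl

lemma getD_word (x : CS) {n i : ℕ} (hi : i < n) : (word x n).getD i 0 = x i := by
  simp [word, hi]

lemma mem_cyl_iff_word {x : CS} {w : List (ZMod 2)} : x ∈ cyl w ↔ word x w.length = w := by
  constructor
  · intro h
    refine List.ext_getElem (by simp) fun i _ hi => ?_
    rw [← List.getD_eq_getElem _ 0 hi, ← h i hi]
    simp [word]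
  · rintro h i hi
    rw [← h, getD_word x hi]

lemma mem_cyl_word (x : CS) (n : ℕ) : x ∈ cyl (word x n) :=
  mem_cyl_iff_word.2 (by simp)

lemma take_word (x : CS) {m n : ℕ} (h : m ≤ n) : (word x n).take m = word x m :=
  List.ext_getElem (by simp [h]) fun i _ _ => by simp [word]

lemma word_prefix (x : CS) {m n : ℕ} (h : m ≤ n) : word x m <+: word x n :=
  take_word x h ▸ List.take_prefix _ _

lemma cyl_eq_cylinder (w : List (ZMod 2)) :
    cyl w = PiNat.cylinder (fun i => w.getD i 0) w.length := rfl

lemma cyl_word (x : CS) (n : ℕ) : cyl (word x n) = PiNat.cylinder x n := by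
  ext y
  simp only [cyl_eq_cylinder, PiNat.mem_cylinder_iff, length_word]
  exact forall₂_congr fun i hi => by rw [getD_word x hi]

lemma isOpen_cyl (w : List (ZMod 2)) : IsOpen (cyl w) := PiNat.isOpen_cylinder _ _ _

lemma measurableSet_cyl (w : List (ZMod 2)) : MeasurableSet (cyl w) :=
  (isOpen_cyl w).measurableSet

@[simp] lemma cyl_nil : cyl [] = univ := by
  simp [cyl]

lemma IsOpen.exists_cyl_word_subset {U : Set CS} (hU : IsOpen U) {x : CS} (hx : x ∈ U) :
    ∃ n, cyl (word x n) ⊆ U := by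
  obtain ⟨_, ⟨y, n, rfl⟩, hxy, hyU⟩ :=
    (PiNat.isTopologicalBasis_cylinders _).exists_subset_of_mem_open hx hU
  rw [PiNat.mem_cylinder_iff_eq] at hxy
  exact ⟨n, by rwa [cyl_word, hxy]⟩

lemma mem_cyl_append {x : CS} {w : List (ZMod 2)} {b : ZMod 2} :
    x ∈ cyl (w ++ [b]) ↔ x ∈ cyl w ∧ x w.length = b := by
  rw [mem_cyl_iff_word, mem_cyl_iff_word, List.length_append, List.length_singleton, word_succ]
  constructor
  · intro h
    obtain ⟨h1, h2⟩ := List.append_inj h (by simp)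
    simp_all
  · rintro ⟨h, rfl⟩
    rw [h]

lemma cyl_mono {v w : List (ZMod 2)} (h : v <+: w) : cyl w ⊆ cyl v := by
  intro x hx
  rw [mem_cyl_iff_word] at hx ⊢
  rw [← hx] at h
  conv_rhs => rw [List.prefix_iff_eq_take.1 h]
  rw [take_word x (by simpa using h.length_le)]

lemma prefix_or_prefix_of_mem_cyl {x : CS} {u v : List (ZMod 2)} (hu : x ∈ cyl u)
    (hv : x ∈ cyl v) : u <+: v ∨ v <+: u := by
  rw [mem_cyl_iff_word] at hu hv
  rw [← hu, ← hv]
  rcases le_total u.length v.length with h | h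
  exacts [.inl (word_prefix x h), .inr (word_prefix x h)]

lemma zmod2_eq_zero_or_one (b : ZMod 2) : b = 0 ∨ b = 1 := by
  fin_cases b
  exacts [.inl rfl, .inr rfl]

lemma cyl_eq_union (w : List (ZMod 2)) : cyl w = cyl (w ++ [0]) ∪ cyl (w ++ [1]) := by
  ext x
  simp only [mem_union, mem_cyl_append, ← and_or_left, iff_self_and]
  exact fun _ => zmod2_eq_zero_or_one _

lemma disjoint_cyl_append (w : List (ZMod 2)) : Disjoint (cyl (w ++ [0])) (cyl (w ++ [1])) :=
  disjoint_left.2 fun x h0 h1 => by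
    rw [mem_cyl_append] at h0 h1
    exact zero_ne_one (h0.2.symm.trans h1.2)

lemma measure_cyl_eq_add (μ : Measure CS) (w : List (ZMod 2)) :
    μ (cyl w) = μ (cyl (w ++ [0])) + μ (cyl (w ++ [1])) := by
  rw [cyl_eq_union w]
  exact measure_union (disjoint_cyl_append w) (measurableSet_cyl _)

lemma Branch.mono {R S : Set CS} {w : List (ZMod 2)} (hRS : R ⊆ S) (h : Branch R w) :
    Branch S w :=
  ⟨h.1.mono (inter_subset_inter_right _ hRS), h.2.mono (inter_subset_inter_right _ hRS)⟩

lemma Branch.nonempty_cyl_append {R : Set CS} {w : List (ZMod 2)} (h : Branch R w)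
    (b : ZMod 2) : (cyl (w ++ [b]) ∩ R).Nonempty := by
  rcases zmod2_eq_zero_or_one b with rfl | rfl
  exacts [h.1, h.2]

def minimalCylWords (U : Set CS) : Set (List (ZMod 2)) :=
  {w | cyl w ⊆ U ∧ ∀ v, v <+: w → cyl v ⊆ U → v = w}

lemma IsOpen.eq_biUnion_minimalCylWords {U : Set CS} (hU : IsOpen U) :
    U = ⋃ w ∈ minimalCylWords U, cyl w := by
  refine Subset.antisymm (fun x hx => ?_) (iUnion₂_subset fun w hw => hw.1)
  classical
  have hex := hU.exists_cyl_word_subset hx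
  refine mem_biUnion ⟨Nat.find_spec hex, fun v hv hvU => ?_⟩ (mem_cyl_word x (Nat.find hex))
  have hlen : v.length ≤ Nat.find hex := by simpa using hv.length_le
  have hxv : word x v.length = v := mem_cyl_iff_word.1 (cyl_mono hv (mem_cyl_word x _))
  have hmin : Nat.find hex ≤ v.length := Nat.find_min' hex (by rwa [hxv])
  exact hv.eq_of_length (by simpa using hlen.antisymm hmin)

lemma pairwiseDisjoint_minimalCylWords (U : Set CS) :
    (minimalCylWords U).PairwiseDisjoint cyl := by
  intro w hw w' hw' hne
  refine disjoint_left.2 fun x hxw hxw' => hne ?_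
  rcases prefix_or_prefix_of_mem_cyl hxw hxw' with h | h
  exacts [hw'.2 w h hw.1, (hw.2 w' h hw'.1).symm]

lemma measure_le_of_forall_cyl_le {μ ν : Measure CS} (h : ∀ w, μ (cyl w) ≤ ν (cyl w))
    {U : Set CS} (hU : IsOpen U) : μ U ≤ ν U := by
  have hS : (minimalCylWords U).Countable := to_countable _
  rw [hU.eq_biUnion_minimalCylWords]
  calc μ (⋃ w ∈ minimalCylWords U, cyl w)
      ≤ ∑' w : minimalCylWords U, μ (cyl w) := measure_biUnion_le μ hS _
    _ ≤ ∑' w : minimalCylWords U, ν (cyl w) := ENNReal.tsum_le_tsum fun w => h w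
    _ = ν (⋃ w ∈ minimalCylWords U, cyl w) :=
      (measure_biUnion hS (pairwiseDisjoint_minimalCylWords U) fun w _ =>
        measurableSet_cyl w).symm

lemma Measure.le_of_forall_cyl_le {μ ν : Measure CS} [IsFiniteMeasure ν]
    (h : ∀ w, μ (cyl w) ≤ ν (cyl w)) : μ ≤ ν := by
  intro s
  rw [s.measure_eq_iInf_isOpen ν]
  exact le_iInf₂ fun U hsU => le_iInf fun hU =>
    (measure_mono hsU).trans (measure_le_of_forall_cyl_le h hU)

section Comparison

variable {P Q R : Set CS} {ν νP νQ : Measure CS} {w : List (ZMod 2)}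

lemma IsCanonical.measure_compl (hR : IsClosed R) (hν : IsCanonical R ν) : ν Rᶜ = 0 := by
  have := hν.1
  rw [prob_compl_eq_zero_iff hR.measurableSet]
  exact hν.2.1

lemma IsCanonical.measure_eq_zero_of_not_nonempty (hR : IsClosed R) (hν : IsCanonical R ν)
    {s : Set CS} (hs : ¬ (s ∩ R).Nonempty) : ν s = 0 :=
  measure_mono_null (fun x hx hxR => hs ⟨x, hx, hxR⟩) (hν.measure_compl hR)

lemma IsCanonical.measure_cyl_append_of_branch (hν : IsCanonical R ν) (hw : Branch R w)
    (b : ZMod 2) : ν (cyl (w ++ [b])) = ν (cyl w) / 2 := by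
  have h01 := hν.2.2 w hw
  rw [measure_cyl_eq_add ν w, ENNReal.div_eq_inv_mul]
  rcases zmod2_eq_zero_or_one b with rfl | rfl
  · rw [← h01, ← two_mul, ENNReal.inv_mul_cancel_left two_ne_zero ENNReal.ofNat_ne_top]
  · rw [h01, ← two_mul, ENNReal.inv_mul_cancel_left two_ne_zero ENNReal.ofNat_ne_top]

lemma IsCanonical.measure_cyl_append_of_not_branch (hR : IsClosed R) (hν : IsCanonical R ν)
    (hw : ¬ Branch R w) {b : ZMod 2} (hb : (cyl (w ++ [b]) ∩ R).Nonempty) :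
    ν (cyl (w ++ [b])) = ν (cyl w) := by
  rw [measure_cyl_eq_add ν w]
  rcases zmod2_eq_zero_or_one b with rfl | rfl
  · rw [hν.measure_eq_zero_of_not_nonempty hR fun h => hw ⟨hb, h⟩, add_zero]
  · rw [hν.measure_eq_zero_of_not_nonempty hR fun h => hw ⟨h, hb⟩, zero_add]

lemma measure_cyl_le_of_isCanonical (hQP : Q ⊆ P) (hQ : IsClosed Q) (hνP : IsCanonical P νP)
    (hνQ : IsCanonical Q νQ) {w : List (ZMod 2)} (hw : (cyl w ∩ Q).Nonempty) :
    νP (cyl w) ≤ νQ (cyl w) := by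
  induction w using List.reverseRecOn with
  | nil => simp [hνP.1.measure_univ, hνQ.1.measure_univ]
  | append_singleton w b ih =>
    have ih := ih (hw.mono (inter_subset_inter_left _ (cyl_mono (List.prefix_append w [b]))))
    by_cases hbr : Branch Q w
    · rw [hνP.measure_cyl_append_of_branch (hbr.mono hQP), hνQ.measure_cyl_append_of_branch hbr]
      exact ENNReal.div_le_div_right ih 2
    · calc νP (cyl (w ++ [b])) ≤ νP (cyl w) :=
            measure_mono (cyl_mono (List.prefix_append w [b]))
        _ ≤ νQ (cyl w) := ih
        _ = νQ (cyl (w ++ [b])) := (hνQ.measure_cyl_append_of_not_branch hQ hbr hw).symm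

lemma restrict_le_of_isCanonical (hQP : Q ⊆ P) (hQ : IsClosed Q) (hνP : IsCanonical P νP)
    (hνQ : IsCanonical Q νQ) : νP.restrict Q ≤ νQ := by
  have := hνQ.1
  refine Measure.le_of_forall_cyl_le fun w => ?_
  rw [Measure.restrict_apply (measurableSet_cyl w)]
  rcases (cyl w ∩ Q).eq_empty_or_nonempty with h | h
  · simp [h]
  · exact (measure_mono inter_subset_left).trans
      (measure_cyl_le_of_isCanonical hQP hQ hνP hνQ h)

end Comparison

section CanonicalMap

variable (R : Set CS)

open Classical in
noncomputable def childBit (u : List (ZMod 2)) : ZMod 2 :=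
  if (cyl (u ++ [0]) ∩ R).Nonempty then 0 else 1

open Classical in
/-- `trace R x k` is the node of length `k` of the tree of `R` through which `canonicalMap R`
sends `x`, together with the number of digits of `x` read so far: the map reads the next digit
of `x` at each branching node and follows the unique child meeting `R` elsewhere. -/
noncomputable def trace (x : CS) : ℕ → List (ZMod 2) × ℕ
  | 0 => ([], 0)
  | k + 1 =>
    if Branch R (trace x k).1 then ((trace x k).1 ++ [x (trace x k).2], (trace x k).2 + 1)
    else ((trace x k).1 ++ [childBit R (trace x k).1], (trace x k).2)

noncomputable def canonicalMap (x : CS) : CS := fun n => (trace R x (n + 1)).1.getD n 0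

variable {R} {x y : CS} {k c : ℕ} {w : List (ZMod 2)}

lemma nonempty_cyl_childBit (h : (cyl w ∩ R).Nonempty) :
    (cyl (w ++ [childBit R w]) ∩ R).Nonempty := by
  unfold childBit
  split_ifs with h0
  · exact h0
  · rw [cyl_eq_union, union_inter_distrib_right, union_nonempty] at h
    exact h.resolve_left h0

lemma trace_succ_of_branch (h : trace R x k = (w, c)) (hw : Branch R w) :
    trace R x (k + 1) = (w ++ [x c], c + 1) := by
  simp [trace, h, hw]

lemma trace_succ_of_not_branch (h : trace R x k = (w, c)) (hw : ¬ Branch R w) :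
    trace R x (k + 1) = (w ++ [childBit R w], c) := by
  simp [trace, h, hw]

lemma exists_trace_succ_fst (x : CS) (k : ℕ) :
    ∃ b, (trace R x (k + 1)).1 = (trace R x k).1 ++ [b] := by
  by_cases hw : Branch R (trace R x k).1
  · exact ⟨_, by rw [trace_succ_of_branch rfl hw]⟩
  · exact ⟨_, by rw [trace_succ_of_not_branch rfl hw]⟩

lemma trace_snd_le_succ (x : CS) (k : ℕ) : (trace R x k).2 ≤ (trace R x (k + 1)).2 := by
  by_cases hw : Branch R (trace R x k).1
  · simp [trace_succ_of_branch rfl hw]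
  · simp [trace_succ_of_not_branch rfl hw]

@[simp] lemma length_trace_fst (x : CS) (k : ℕ) : (trace R x k).1.length = k := by
  induction k with
  | zero => rfl
  | succ k ih =>
    obtain ⟨b, hb⟩ := exists_trace_succ_fst (R := R) x k
    simp [hb, ih]

lemma trace_fst_prefix (x : CS) {k l : ℕ} (h : k ≤ l) :
    (trace R x k).1 <+: (trace R x l).1 := by
  induction l, h using Nat.le_induction with
  | base => exact List.prefix_refl _
  | succ l _ ih =>
    obtain ⟨b, hb⟩ := exists_trace_succ_fst (R := R) x l
    exact hb ▸ ih.trans (List.prefix_append _ _)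

lemma trace_congr (h : ∀ i < (trace R x k).2, x i = y i) : trace R x k = trace R y k := by
  induction k with
  | zero => rfl
  | succ k ih =>
    have hk := ih fun i hi => h i (hi.trans_le (trace_snd_le_succ x k))
    by_cases hw : Branch R (trace R x k).1
    · have hx := h _ (by rw [trace_succ_of_branch rfl hw]; exact Nat.lt_succ_self _)
      rw [trace_succ_of_branch rfl hw, trace_succ_of_branch hk.symm hw, hx]
    · rw [trace_succ_of_not_branch rfl hw, trace_succ_of_not_branch hk.symm hw]

lemma trace_eq_iff_of_eqOn (h : ∀ i < c, x i = y i) :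
    trace R x k = (w, c) ↔ trace R y k = (w, c) :=
  ⟨fun hx => (trace_congr fun i hi => h i (by rwa [hx] at hi)) ▸ hx,
   fun hy => (trace_congr fun i hi => (h i (by rwa [hy] at hi)).symm) ▸ hy⟩

lemma isLocallyConstant_trace (k : ℕ) : IsLocallyConstant fun x => trace R x k := by
  refine (IsLocallyConstant.iff_eventually_eq _).2 fun x => ?_
  have hcoord : ∀ i, ∀ᶠ y in 𝓝 x, x i = y i := fun i =>
    (continuous_apply i).continuousAt.eventually_mem (isOpen_discrete {x i} |>.mem_nhds rfl)
      |>.mono fun y hy => hy.symm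
  filter_upwards [(Finset.range (trace R x k).2).eventually_all.2 fun i _ => hcoord i]
    with y hy
  exact (trace_congr fun i hi => hy i (Finset.mem_range.2 hi)).symm

lemma measurableSet_trace_eq (k : ℕ) (p : List (ZMod 2) × ℕ) :
    MeasurableSet {x | trace R x k = p} :=
  ((isLocallyConstant_trace k).isOpen_fiber p).measurableSet

lemma continuous_canonicalMap : Continuous (canonicalMap R) :=
  continuous_pi fun n =>
    ((isLocallyConstant_trace (n + 1)).comp fun p => p.1.getD n 0).continuous

lemma canonicalMap_mem_cyl_trace (x : CS) (k : ℕ) : canonicalMap R x ∈ cyl (trace R x k).1 := by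
  intro i hi
  rw [length_trace_fst] at hi
  have hpre := trace_fst_prefix (R := R) x (Nat.succ_le_of_lt hi)
  show (trace R x (i + 1)).1.getD i 0 = _
  rw [List.getD_eq_getElem _ _ (by simp), List.getD_eq_getElem _ _ (by simpa), hpre.getElem]

lemma canonicalMap_mem_cyl_iff : canonicalMap R x ∈ cyl w ↔ (trace R x w.length).1 = w := by
  constructor
  · intro h
    have htrace := mem_cyl_iff_word.1 (canonicalMap_mem_cyl_trace (R := R) x w.length)
    rw [length_trace_fst] at htrace
    exact htrace.symm.trans (mem_cyl_iff_word.1 h)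
  · rintro h
    exact h ▸ canonicalMap_mem_cyl_trace x _

lemma nonempty_cyl_trace_inter (hR : R.Nonempty) (x : CS) (k : ℕ) :
    (cyl (trace R x k).1 ∩ R).Nonempty := by
  induction k with
  | zero => simpa [trace] using hR
  | succ k ih =>
    by_cases hw : Branch R (trace R x k).1
    · rw [trace_succ_of_branch rfl hw]
      exact hw.nonempty_cyl_append _
    · rw [trace_succ_of_not_branch rfl hw]
      exact nonempty_cyl_childBit ih

lemma canonicalMap_mem (hR : IsClosed R) (hne : R.Nonempty) (x : CS) : canonicalMap R x ∈ R := by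
  choose y hy using nonempty_cyl_trace_inter hne x
  refine hR.mem_of_tendsto (tendsto_pi_nhds.2 fun i => ?_)
    (Eventually.of_forall (f := atTop) fun k => (hy k).2)
  refine tendsto_atTop_of_eventually_const (i₀ := i + 1) fun k hk => ?_
  have hi : i < (trace R x k).1.length := by simpa using hk
  rw [(hy k).1 i hi, canonicalMap_mem_cyl_trace x k i hi]

lemma preimage_canonicalMap_cyl_append_of_branch (hw : Branch R w) (b : ZMod 2) :
    canonicalMap R ⁻¹' cyl (w ++ [b]) =
      ⋃ c, {x | trace R x w.length = (w, c)} ∩ {x | x c = b} := by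
  ext x
  simp only [mem_preimage, canonicalMap_mem_cyl_iff, mem_iUnion, mem_inter_iff, mem_ofPred_eq,
    List.length_append, List.length_singleton]
  constructor
  · intro h
    obtain ⟨b', hb'⟩ := exists_trace_succ_fst (R := R) x w.length
    obtain ⟨hwx, -⟩ := List.append_inj (hb'.symm.trans h) (by simp)
    refine ⟨_, Prod.ext hwx rfl, ?_⟩
    simpa [trace_succ_of_branch (Prod.ext hwx rfl) hw] using h
  · rintro ⟨c, hc, rfl⟩
    rw [trace_succ_of_branch hc hw]

lemma measure_trace_eq_inter_coord_eq (μ : Measure CS) [μ.IsAddLeftInvariant] (k c : ℕ)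
    (w : List (ZMod 2)) :
    μ ({x | trace R x k = (w, c)} ∩ {x | x c = 0}) =
      μ ({x | trace R x k = (w, c)} ∩ {x | x c = 1}) := by
  conv_rhs => rw [← measure_preimage_add μ (Pi.single c 1)]
  congr 1
  ext x
  simp only [mem_inter_iff, mem_ofPred_eq, mem_preimage, Pi.add_apply, Pi.single_eq_same,
    add_eq_left]
  exact and_congr_left' (trace_eq_iff_of_eqOn fun i hi => by simp [hi.ne]).symm

lemma measure_preimage_canonicalMap_cyl_append_of_branch (μ : Measure CS) [μ.IsAddLeftInvariant]
    (hw : Branch R w) :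
    μ (canonicalMap R ⁻¹' cyl (w ++ [0])) = μ (canonicalMap R ⁻¹' cyl (w ++ [1])) := by
  have hdisj : ∀ b : ZMod 2, Pairwise (Function.onFun Disjoint
      fun c => {x | trace R x w.length = (w, c)} ∩ {x | x c = b}) :=
    fun b c c' hcc' => disjoint_left.2 fun x hx hx' =>
      hcc' (congrArg Prod.snd (hx.1.symm.trans hx'.1))
  have hmeas : ∀ (b : ZMod 2) c,
      MeasurableSet ({x | trace R x w.length = (w, c)} ∩ {x : CS | x c = b}) :=
    fun b c => (measurableSet_trace_eq _ _).inter
      (measurableSet_eq_fun (measurable_pi_apply c) measurable_const)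
  simp only [preimage_canonicalMap_cyl_append_of_branch hw, measure_iUnion (hdisj _) (hmeas _),
    measure_trace_eq_inter_coord_eq μ]

lemma exists_isCanonical (hR : IsClosed R) (hne : R.Nonempty) : ∃ ν, IsCanonical R ν := by
  let μ : Measure CS := Measure.addHaarMeasure ⊤
  have : IsProbabilityMeasure μ := by
    have h := Measure.addHaarMeasure_self (K₀ := (⊤ : TopologicalSpace.PositiveCompacts CS))
    rw [TopologicalSpace.PositiveCompacts.coe_top] at h
    exact ⟨h⟩
  have hmap := continuous_canonicalMap (R := R).measurable
  refine ⟨μ.map (canonicalMap R), Measure.isProbabilityMeasure_map hmap.aemeasurable, ?_,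
    fun w hw => ?_⟩
  · have hpre : canonicalMap R ⁻¹' R = univ := eq_univ_of_forall (canonicalMap_mem hR hne)
    rw [Measure.map_apply hmap hR.measurableSet, hpre, measure_univ]
  · rw [Measure.map_apply hmap (measurableSet_cyl _), Measure.map_apply hmap (measurableSet_cyl _)]
    exact measure_preimage_canonicalMap_cyl_append_of_branch μ hw

end CanonicalMap

section Decomposition

variable {P : Set CS} {Q : ℕ → Set CS} {νP : Measure CS} {νQ : ℕ → Measure CS}

lemma measure_le_tsum_of_isCanonical (hQP : ∀ n, Q n ⊆ P) (hQ : ∀ n, IsClosed (Q n))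
    (hνP : IsCanonical P νP) (hνQ : ∀ n, IsCanonical (Q n) (νQ n))
    (hcover : νP (⋃ n, Q n)ᶜ = 0) (A : Set CS) : νP A ≤ ∑' n, νQ n (A ∩ Q n) :=
  calc νP A = νP (⋃ n, A ∩ Q n) := by rw [← inter_iUnion, measure_inter_conull hcover]
    _ ≤ ∑' n, νP (A ∩ Q n) := measure_iUnion_le _
    _ ≤ ∑' n, νQ n (A ∩ Q n) := ENNReal.tsum_le_tsum fun n => by
      rw [← Measure.restrict_eq_self νP inter_subset_right]
      exact restrict_le_of_isCanonical (hQP n) (hQ n) hνP (hνQ n) _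

lemma nullMeasurableSet_inter_of_isCanonical {Q : Set CS} {νQ : Measure CS} (hQP : Q ⊆ P)
    (hQ : IsClosed Q) (hνP : IsCanonical P νP) (hνQ : IsCanonical Q νQ) {s : Set CS}
    (hs : NullMeasurableSet (s ∩ Q) νQ) : NullMeasurableSet (s ∩ Q) νP := by
  have hac := Measure.absolutelyContinuous_of_le (restrict_le_of_isCanonical hQP hQ hνP hνQ)
  have h := (nullMeasurableSet_restrict hQ.measurableSet.nullMeasurableSet).1 (hs.mono_ac hac)
  rwa [inter_assoc, inter_self] at h

lemma nullMeasurableSet_of_isCanonical (hQP : ∀ n, Q n ⊆ P) (hQ : ∀ n, IsClosed (Q n))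
    (hνP : IsCanonical P νP) (hνQ : ∀ n, IsCanonical (Q n) (νQ n))
    (hcover : νP (⋃ n, Q n)ᶜ = 0) {A : Set CS}
    (hA : ∀ n, NullMeasurableSet (A ∩ Q n) (νQ n)) :
    NullMeasurableSet A νP := by
  have h := NullMeasurableSet.iUnion fun n =>
    nullMeasurableSet_inter_of_isCanonical (hQP n) (hQ n) hνP (hνQ n) (hA n)
  rw [← inter_iUnion] at h
  exact h.congr (inter_ae_eq_left_of_ae_eq_univ (ae_eq_univ.2 hcover))

end Decomposition

theorem stmt_1_general (P : Set CS) (Q : ℕ → Set CS) (hQ : ∀ n, PerfSet (Q n))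
    (hQP : ∀ n, Q n ⊆ P)
    (hcover : ∀ ν : Measure CS, IsCanonical P ν → ν (⋃ n, Q n) = 1)
    (A : Set CS) (hA : A ⊆ P)
    (hmeas : ∀ n, PMeasurable (Q n) A) :
    (PMeasurable P A ∧
      ∀ (νP : Measure CS) (νQ : ℕ → Measure CS), IsCanonical P νP →
        (∀ n, IsCanonical (Q n) (νQ n)) → νP A ≤ ∑' n, νQ n (A ∩ Q n)) ∧
    ((∀ n, PNull (Q n) A) → PNull P A) := by
  have hQc n : IsClosed (Q n) := (hQ n).1.closed
  choose νQ hνQ using fun n => exists_isCanonical (hQc n) (hQ n).2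
  have hconull (νP : Measure CS) (hνP : IsCanonical P νP) : νP (⋃ n, Q n)ᶜ = 0 := by
    have := hνP.1
    exact (prob_compl_eq_zero_iff (.iUnion fun n => (hQc n).measurableSet)).2 (hcover νP hνP)
  have hbound (νP : Measure CS) (νQ' : ℕ → Measure CS) (hνP : IsCanonical P νP)
      (hνQ' : ∀ n, IsCanonical (Q n) (νQ' n)) : νP A ≤ ∑' n, νQ' n (A ∩ Q n) :=
    measure_le_tsum_of_isCanonical hQP hQc hνP hνQ' (hconull νP hνP) A
  have hAP : A ∩ P = A := inter_eq_left.2 hA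
  refine ⟨⟨fun νP hνP => ?_, hbound⟩, fun hnull νP hνP => ?_⟩
  · rw [hAP]
    exact nullMeasurableSet_of_isCanonical hQP hQc hνP hνQ (hconull νP hνP)
      fun n => hmeas n _ (hνQ n)
  · rw [hAP, ← nonpos_iff_eq_zero]
    calc νP A ≤ ∑' n, νQ n (A ∩ Q n) := hbound νP νQ hνP hνQ
      _ = 0 := by simp [hnull _ _ (hνQ _)]

/-- If `Q n ⊆ P` are perfect sets with `μ_P (⋃ n, Q n) = 1` and `A ⊆ P` is
such that each `A ∩ Q n` is `Q n`-measurable, then `A` is `P`-measurable and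
`μ_P A ≤ Σ_n μ_{Q n} (A ∩ Q n)`; in particular if each `A ∩ Q n` is `Q n`-null,
then `A` is `P`-null. -/
theorem stmt_1 (P : Set CS) (hP : PerfSet P) (Q : ℕ → Set CS) (hQ : ∀ n, PerfSet (Q n))
    (hQP : ∀ n, Q n ⊆ P)
    (hcover : ∀ ν : Measure CS, IsCanonical P ν → ν (⋃ n, Q n) = 1)
    (A : Set CS) (hA : A ⊆ P)
    (hmeas : ∀ n, PMeasurable (Q n) A) :
    (PMeasurable P A ∧
      ∀ (νP : Measure CS) (νQ : ℕ → Measure CS), IsCanonical P νP →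
        (∀ n, IsCanonical (Q n) (νQ n)) → νP A ≤ ∑' n, νQ n (A ∩ Q n)) ∧
    ((∀ n, PNull (Q n) A) → PNull P A) :=
  stmt_1_general P Q hQ hQP hcover A hA hmeas
end

section
/- If X ⊆ 2^ω is S-null for every Silver perfect set S ⊆ 2^ω, then X has the v₀ property: for every Silver perfect set P there exists a Silver perfect set Q with Q ⊆ P ∖ X. -/
/-!
The canonical measure of the Silver set determined by `f` is the image of Haar measure under
the retraction that fills in the values of `f`; it is invariant under flipping any free
coordinate. As `X ∩ P` is null, `P \ X` contains a closed set `K` of positive measure. By outer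
regularity, flipping a far enough free coordinate moves only a small part of the mass of a closed
set out of it. Intersecting `K` successively with its flips along coordinates `n₀, n₁, …`, with
summable losses, leaves a nonempty closed set invariant under all these flips, and such a set
contains the Silver set of points agreeing with one of its points off `{n₀, n₁, …}`.
-/

open MeasureTheory Set Pointwise

open Filter Topology ENNReal

lemma mem_cyl_append_singleton {x : CS} {w : List (ZMod 2)} {c : ZMod 2} :
    x ∈ cyl (w ++ [c]) ↔ x ∈ cyl w ∧ x w.length = c := by
  simp only [cyl, mem_ofPred_eq, List.length_append, List.length_singleton]
  constructor
  · intro h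
    refine ⟨fun i hi => ?_, by simpa using h w.length (by omega)⟩
    simpa [List.getD, List.getElem?_append_left hi] using h i (by omega)
  · rintro ⟨h, hc⟩ i hi
    rcases (Nat.lt_succ_iff.1 hi).lt_or_eq with hi | rfl
    · simpa [List.getD, List.getElem?_append_left hi] using h i hi
    · simpa using hc

lemma preimage_add_single_cyl_append (w : List (ZMod 2)) (c : ZMod 2) :
    (· + Pi.single w.length 1) ⁻¹' cyl (w ++ [c]) = cyl (w ++ [c + 1]) := by
  ext x
  have hw : x + Pi.single w.length 1 ∈ cyl w ↔ x ∈ cyl w := by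
    refine forall₂_congr fun i hi => ?_
    simp [hi.ne]
  have hc : x w.length + 1 = c ↔ x w.length = c + 1 := by
    generalize x w.length = a
    revert a c; decide
  simp [mem_cyl_append_singleton, hw, hc]

lemma isClosed_cyl (w : List (ZMod 2)) : IsClosed (cyl w) := by
  simp only [cyl, ofPred_forall]
  exact isClosed_iInter fun i => isClosed_iInter fun _ =>
    isClosed_eq (continuous_apply i) continuous_const

section SilverMeasure

instance : IsProbabilityMeasure (Measure.addHaarMeasure ⊤ : Measure CS) :=
  ⟨by simpa using Measure.addHaarMeasure_self (K₀ := (⊤ : TopologicalSpace.PositiveCompacts CS))⟩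

variable (f : ℕ → Option (ZMod 2))

def silverSet : Set CS := {x | ∀ n b, f n = some b → x n = b}

def silverRetract (x : CS) : CS := fun n => (f n).getD (x n)

noncomputable def silverMeasure : Measure CS :=
  (Measure.addHaarMeasure ⊤ : Measure CS).map (silverRetract f)

lemma isClosed_silverSet : IsClosed (silverSet f) := by
  simp only [silverSet, ofPred_forall]
  exact isClosed_iInter fun n => isClosed_iInter fun _ => isClosed_iInter fun _ =>
    isClosed_eq (continuous_apply n) continuous_const

lemma continuous_silverRetract : Continuous (silverRetract f) :=
  continuous_pi fun n => continuous_of_discreteTopology.comp (continuous_apply n)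

lemma preimage_silverRetract_silverSet : silverRetract f ⁻¹' silverSet f = univ :=
  eq_univ_of_forall fun x n b hb => by simp [silverRetract, hb]

instance : IsProbabilityMeasure (silverMeasure f) :=
  Measure.isProbabilityMeasure_map (continuous_silverRetract f).measurable.aemeasurable

lemma silverMeasure_silverSet : silverMeasure f (silverSet f) = 1 := by
  refine le_antisymm prob_le_one ?_
  calc 1 = Measure.addHaarMeasure ⊤ (silverRetract f ⁻¹' silverSet f) := by
        rw [preimage_silverRetract_silverSet, measure_univ]
    _ ≤ silverMeasure f (silverSet f) :=
        Measure.le_map_apply (continuous_silverRetract f).measurable.aemeasurable _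

variable {f}

lemma silverRetract_add_single {n : ℕ} (hn : f n = none) (x : CS) :
    silverRetract f (x + Pi.single n 1) = silverRetract f x + Pi.single n 1 := by
  funext m
  rcases eq_or_ne m n with rfl | h
  · simp [silverRetract, hn]
  · simp [silverRetract, h]

lemma measurePreserving_add_single_silverMeasure {n : ℕ} (hn : f n = none) :
    MeasurePreserving (· + Pi.single n 1) (silverMeasure f) (silverMeasure f) := by
  refine ⟨measurable_add_const _, ?_⟩
  have hF := (continuous_silverRetract f).measurable
  have hcomm : (· + Pi.single n 1) ∘ silverRetract f = silverRetract f ∘ (· + Pi.single n 1) :=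
    funext fun x => (silverRetract_add_single hn x).symm
  rw [silverMeasure, Measure.map_map (measurable_add_const _) hF, hcomm,
    ← Measure.map_map hF (measurable_add_const _), map_add_right_eq_self]

lemma eq_none_of_branch_silverSet {w : List (ZMod 2)} (hw : Branch (silverSet f) w) :
    f w.length = none := by
  obtain ⟨⟨x, hx, hxf⟩, ⟨y, hy, hyf⟩⟩ := hw
  by_contra h
  obtain ⟨b, hb⟩ := Option.ne_none_iff_exists'.1 h
  have h0 := (mem_cyl_append_singleton.1 hx).2
  have h1 := (mem_cyl_append_singleton.1 hy).2
  rw [hxf _ _ hb] at h0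
  rw [hyf _ _ hb] at h1
  exact zero_ne_one (h0.symm.trans h1)

lemma isCanonical_silverMeasure : IsCanonical (silverSet f) (silverMeasure f) := by
  refine ⟨inferInstance, silverMeasure_silverSet f, fun w hw => ?_⟩
  have hflip := measurePreserving_add_single_silverMeasure (eq_none_of_branch_silverSet hw)
  rw [← hflip.measure_preimage (isClosed_cyl _).measurableSet.nullMeasurableSet,
    preimage_add_single_cyl_append]
  rfl

end SilverMeasure

/-- If `D + V ⊆ U` with `ν (U \ D) < ε`, a measure-preserving translation by `g ∈ V` moves
at most `ε` of the mass of `D` out of `D`. -/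
lemma eventually_measure_le_measure_inter_preimage_add {G : Type*} [AddGroup G]
    [TopologicalSpace G] [ContinuousAdd G] [MeasurableSpace G] [OpensMeasurableSpace G]
    {ν : Measure G} [IsFiniteMeasure ν] [ν.OuterRegular] {D : Set G} (hDc : IsCompact D)
    (hD : IsClosed D) {ε : ℝ≥0∞} (hε : ε ≠ 0) :
    ∀ᶠ g in 𝓝 0, MeasurePreserving (· + g) ν ν → ν D ≤ ν (D ∩ (· + g) ⁻¹' D) + ε := by
  obtain ⟨U, hDU, hU, hUν⟩ :=
    Set.exists_isOpen_lt_of_lt D (ν D + ε) (ENNReal.lt_add_right (measure_ne_top ν D) hε)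
  obtain ⟨V, hV, hDVU⟩ := compact_open_separated_add_right hDc hU hDU
  filter_upwards [hV] with g hg hpres
  have hout : D \ (· + g) ⁻¹' D ⊆ (· + g) ⁻¹' (U \ D) :=
    fun x hx => ⟨hDVU (add_mem_add hx.1 hg), hx.2⟩
  calc ν D ≤ ν (D ∩ (· + g) ⁻¹' D) + ν (D \ (· + g) ⁻¹' D) := measure_le_inter_add_sdiff _ _ _
    _ ≤ ν (D ∩ (· + g) ⁻¹' D) + ν (U \ D) := add_le_add le_rfl <| (measure_mono hout).trans_eq
          (hpres.measure_preimage (hU.measurableSet.diff hD.measurableSet).nullMeasurableSet)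
    _ ≤ ν (D ∩ (· + g) ⁻¹' D) + ε := add_le_add le_rfl <| (measure_sdiff_lt_of_lt_add
          hD.measurableSet.nullMeasurableSet hDU (measure_ne_top ν D) hUν).le

lemma tendsto_single_one_atTop : Tendsto (fun n => (Pi.single n 1 : CS)) atTop (𝓝 0) :=
  tendsto_pi_nhds.2 fun m => tendsto_const_nhds.congr'
    ((eventually_gt_atTop m).mono fun n hn => by simp [hn.ne])

lemma exists_ge_measure_le_measure_inter_preimage_add_single {ν : Measure CS}
    [IsFiniteMeasure ν] {S : Set ℕ} (hS : S.Infinite)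
    (hν : ∀ n ∈ S, MeasurePreserving (· + Pi.single n 1) ν ν) {D : Set CS} (hD : IsClosed D)
    {ε : ℝ≥0∞} (hε : ε ≠ 0) (N : ℕ) :
    ∃ n, N ≤ n ∧ ν D ≤ ν (D ∩ (· + Pi.single n 1) ⁻¹' D) + ε := by
  have hev := tendsto_single_one_atTop.eventually
    (eventually_measure_le_measure_inter_preimage_add (ν := ν) hD.isCompact hD hε)
  obtain ⟨n, hnS, hn, hnN⟩ := ((Nat.frequently_atTop_iff_infinite.2 hS).and_eventually
    (hev.and (eventually_ge_atTop N))).exists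
  exact ⟨n, hnN, hn (hν n hnS)⟩

lemma measure_le_measure_iInter_add_tsum {α : Type*} [MeasurableSpace α] {ν : Measure α}
    [IsFiniteMeasure ν] {D : ℕ → Set α} (hD : Antitone D) (hDm : ∀ k, NullMeasurableSet (D k) ν)
    {ε : ℕ → ℝ≥0∞} (hε : ∀ k, ν (D k) ≤ ν (D (k + 1)) + ε k) :
    ν (D 0) ≤ ν (⋂ k, D k) + ∑' k, ε k := by
  have hpartial : ∀ k, ν (D 0) ≤ ν (D k) + ∑ i ∈ Finset.range k, ε i := by
    intro k
    induction k with
    | zero => simp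
    | succ k ih =>
      calc ν (D 0) ≤ ν (D k) + ∑ i ∈ Finset.range k, ε i := ih
        _ ≤ ν (D (k + 1)) + ε k + ∑ i ∈ Finset.range k, ε i := by gcongr; exact hε k
        _ = ν (D (k + 1)) + ∑ i ∈ Finset.range (k + 1), ε i := by
          rw [Finset.sum_range_succ]; ring
  rw [hD.measure_iInter hDm ⟨0, measure_ne_top ν _⟩, ENNReal.iInf_add]
  exact le_iInf fun k => (hpartial k).trans (by gcongr; exact ENNReal.sum_le_tsum _)

lemma add_single_add_single (x : CS) (n : ℕ) : x + Pi.single n 1 + Pi.single n 1 = x := by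
  rw [add_assoc, ← Pi.single_add, show (1 : ZMod 2) + 1 = 0 from rfl, Pi.single_zero, add_zero]

section Shrinking

variable {D : ℕ → Set CS} {n : ℕ → ℕ}

lemma antitone_of_eq_inter_preimage
    (hD : ∀ k, D (k + 1) = D k ∩ (· + Pi.single (n k) 1) ⁻¹' D k) : Antitone D :=
  antitone_nat_of_succ_le fun k => (hD k).symm ▸ inter_subset_left

lemma add_single_mem_of_lt (hD : ∀ k, D (k + 1) = D k ∩ (· + Pi.single (n k) 1) ⁻¹' D k)
    {k m : ℕ} (hkm : k < m) {x : CS} (hx : x ∈ D m) : x + Pi.single (n k) 1 ∈ D m := by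
  induction m generalizing x with
  | zero => omega
  | succ m ih =>
    rw [hD] at hx ⊢
    rcases (Nat.lt_succ_iff.1 hkm).lt_or_eq with hkm | rfl
    · refine ⟨ih hkm hx.1, ?_⟩
      simpa only [mem_preimage, add_right_comm] using ih hkm hx.2
    · exact ⟨hx.2, by simpa only [mem_preimage, add_single_add_single] using hx.1⟩

lemma add_single_mem_iInter (hD : ∀ k, D (k + 1) = D k ∩ (· + Pi.single (n k) 1) ⁻¹' D k)
    (k : ℕ) {x : CS} (hx : x ∈ ⋂ m, D m) : x + Pi.single (n k) 1 ∈ ⋂ m, D m :=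
  mem_iInter.2 fun m => antitone_of_eq_inter_preimage hD (le_max_left m (k + 1))
    (add_single_mem_of_lt hD (lt_of_lt_of_le k.lt_succ_self (le_max_right m (k + 1)))
      (mem_iInter.1 hx _))

end Shrinking

def agreeOff (x : CS) (R : Set ℕ) : Set CS := {y | ∀ m ∉ R, y m = x m}

lemma silverPerf_agreeOff (x : CS) {R : Set ℕ} (hR : R.Infinite) : SilverPerf (agreeOff x R) := by
  classical
  refine ⟨fun m => if m ∈ R then none else some (x m), by simpa using hR, ?_⟩
  ext y
  refine forall_congr' fun m => ?_
  by_cases hm : m ∈ R <;> simp [hm, eq_comm]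

lemma agreeOff_subset {D : Set CS} (hD : IsClosed D) {R : Set ℕ}
    (hR : ∀ n ∈ R, ∀ y ∈ D, y + Pi.single n 1 ∈ D) {x : CS} (hx : x ∈ D) : agreeOff x R ⊆ D := by
  have hfin : ∀ j y, (∀ m, m ∉ R ∨ j ≤ m → y m = x m) → y ∈ D := by
    intro j
    induction j with
    | zero => intro y hy; rwa [funext fun m => hy m (Or.inr m.zero_le)]
    | succ j ih =>
      intro y hy
      have hy' : Function.update y j (x j) ∈ D := ih _ fun m hm => by
        rcases eq_or_ne m j with rfl | hmj
        · simp
        · rw [Function.update_of_ne hmj]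
          exact hy m (hm.imp_right fun h => lt_of_le_of_ne h hmj.symm)
      have hsplit : y = Function.update y j (x j) + Pi.single j (y j - x j) := by
        ext m
        rcases eq_or_ne m j with rfl | hmj <;> simp [*]
      by_cases hj : j ∈ R
      · rw [hsplit]
        obtain h | h : y j - x j = 0 ∨ y j - x j = 1 := by
          generalize y j - x j = c; revert c; decide
        · rwa [h, Pi.single_zero, add_zero]
        · rw [h]; exact hR j hj _ hy'
      · rwa [hsplit, hy j (Or.inl hj), sub_self, Pi.single_zero, add_zero]
  intro y hy
  let z : ℕ → CS := fun j m => if m < j then y m else x m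
  have hz : Tendsto z atTop (𝓝 y) := tendsto_pi_nhds.2 fun m => tendsto_const_nhds.congr' <|
    (eventually_gt_atTop m).mono fun j hj => by simp [z, hj]
  refine hD.mem_of_tendsto hz (Eventually.of_forall fun j => hfin j (z j) fun m hm => ?_)
  simp only [z]
  split_ifs with hmj
  · exact hy m (hm.resolve_right (not_le.2 hmj))
  · rfl

theorem exists_silverPerf_subset_of_measure_ne_zero {ν : Measure CS} [IsFiniteMeasure ν]
    {S : Set ℕ} (hS : S.Infinite) (hν : ∀ n ∈ S, MeasurePreserving (· + Pi.single n 1) ν ν)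
    {K : Set CS} (hK : IsClosed K) (hK0 : ν K ≠ 0) : ∃ Q, SilverPerf Q ∧ Q ⊆ K := by
  obtain ⟨ε, hε0, hεK⟩ := ENNReal.exists_pos_sum_of_countable hK0 ℕ
  have hstep : ∀ (k : ℕ) (D : Set CS), IsClosed D →
      ∃ n, k ≤ n ∧ ν D ≤ ν (D ∩ (· + Pi.single n 1) ⁻¹' D) + ε k := fun k D hD =>
    exists_ge_measure_le_measure_inter_preimage_add_single hS hν hD
      (ENNReal.coe_ne_zero.2 (hε0 k).ne') k
  choose! pick hpick_ge hpick using hstep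
  let D : ℕ → Set CS := fun k =>
    Nat.rec K (fun k Dk => Dk ∩ (· + Pi.single (pick k Dk) 1) ⁻¹' Dk) k
  let n : ℕ → ℕ := fun k => pick k (D k)
  have hD : ∀ k, D (k + 1) = D k ∩ (· + Pi.single (n k) 1) ⁻¹' D k := fun _ => rfl
  have hD_closed : ∀ k, IsClosed (D k) := by
    intro k
    induction k with
    | zero => exact hK
    | succ k ih => rw [hD]; exact ih.inter (ih.preimage (continuous_add_const _))
  have hmass : ν (⋂ k, D k) ≠ 0 := by
    intro h
    have hK_le := measure_le_measure_iInter_add_tsum (antitone_of_eq_inter_preimage hD)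
      (fun k => (hD_closed k).measurableSet.nullMeasurableSet)
      (fun k => hpick k (D k) (hD_closed k))
    rw [h, zero_add] at hK_le
    exact (hK_le.trans_lt hεK).false
  obtain ⟨x, hx⟩ := nonempty_of_measure_ne_zero hmass
  have hn : (range n).Infinite := infinite_of_forall_exists_gt fun k =>
    ⟨n (k + 1), mem_range_self _, hpick_ge _ _ (hD_closed (k + 1))⟩
  refine ⟨agreeOff x (range n), silverPerf_agreeOff x hn, ?_⟩
  refine (agreeOff_subset (isClosed_iInter hD_closed) ?_ hx).trans (iInter_subset D 0)
  rintro _ ⟨k, rfl⟩ y hy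
  exact add_single_mem_iInter hD k hy

lemma exists_isClosed_subset_diff_of_measure_inter_eq_zero {α : Type*} [TopologicalSpace α]
    [MeasurableSpace α] {ν : Measure α} [IsFiniteMeasure ν] [ν.WeaklyRegular] {P X : Set α}
    (hP : MeasurableSet P) (hP0 : ν P ≠ 0) (hX : ν (X ∩ P) = 0) :
    ∃ K ⊆ P \ X, IsClosed K ∧ ν K ≠ 0 := by
  obtain ⟨B, hXB, hB, hB0⟩ := exists_measurable_superset_of_null hX
  have hPB : ν (P \ B) ≠ 0 := by rwa [measure_sdiff_null hB0]
  obtain ⟨K, hKPB, hK, hK0⟩ := (hP.diff hB).exists_lt_isClosed_of_ne_top (measure_ne_top ν _)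
    (pos_iff_ne_zero.2 hPB)
  refine ⟨K, fun x hx => ⟨(hKPB hx).1, fun hxX => ?_⟩, hK, hK0.ne'⟩
  exact (hKPB hx).2 (hXB ⟨hxX, (hKPB hx).1⟩)

/-- If `X` is `S`-null for every Silver perfect set `S`, then `X` has the
`v₀` property: inside every Silver perfect `P` there is a Silver perfect `Q ⊆ P \ X`. -/
theorem stmt_10 (X : Set CS) (hX : ∀ S, SilverPerf S → PNull S X) :
    ∀ P, SilverPerf P → ∃ Q, SilverPerf Q ∧ Q ⊆ P \ X := by
  rintro P ⟨f, hf, hP⟩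
  obtain rfl : P = silverSet f := hP
  have hcan := isCanonical_silverMeasure (f := f)
  obtain ⟨K, hKP, hK, hK0⟩ := exists_isClosed_subset_diff_of_measure_inter_eq_zero
    (isClosed_silverSet f).measurableSet (by rw [hcan.2.1]; exact one_ne_zero)
    (hX _ ⟨f, hf, rfl⟩ _ hcan)
  obtain ⟨Q, hQ, hQK⟩ := exists_silverPerf_subset_of_measure_ne_zero hf
    (fun n hn => measurePreserving_add_single_silverMeasure hn) hK hK0
  exact ⟨Q, hQ, hQK.trans hKP⟩
end
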